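/- arXiv:1710.09423 — 2 statements merged into one kernel-verified Lean document; each statement's English description precedes it below -/
import Mathlib

section
/- Let n ≥ 2 be an integer, a > 2 a real number, c a point of the Euclidean plane, r = a/(2·sin(π/n)), and p_k = c + r·(cos(2πk/n), sin(2πk/n)) for k = 0, …, n−1. Then for all distinct indices j ≠ k, the closed unit discs centered at p_j and p_k are disjoint; i.e., the circle of radius a/(2·sin(π/n)) accommodates n unit-disc (fat) robots placed equally spaced without overlap. -/
set_option maxHeartbeats 1000000


open Real Metric

lemma sin_base_le (b x : ℝ) (hb0 : 0 < b) (hb : b ≤ π/2) (h1 : b ≤ x) (h2 : x ≤ π - b) :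
    Real.sin b ≤ Real.sin x := by
  rcases le_or_gt x (π/2) with h | h
  · exact Real.sin_le_sin_of_le_of_le_pi_div_two (by linarith) h h1
  · rw [← Real.sin_pi_sub x]
    exact Real.sin_le_sin_of_le_of_le_pi_div_two (by linarith) (by linarith) (by linarith)

theorem uniform_circle_fat_robots_disjoint
    (n : ℕ) (hn : 2 ≤ n) (a : ℝ) (ha : 2 < a)
    (c : EuclideanSpace ℝ (Fin 2))
    (r : ℝ) (hr : r = a / (2 * Real.sin (π / n)))
    (p : ℕ → EuclideanSpace ℝ (Fin 2))
    (hp : ∀ k : ℕ,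
      p k 0 = c 0 + r * Real.cos (2 * π * k / n) ∧
      p k 1 = c 1 + r * Real.sin (2 * π * k / n)) :
    ∀ j k : ℕ, j < n → k < n → j ≠ k →
      Disjoint (Metric.closedBall (p j) 1) (Metric.closedBall (p k) 1) := by
  have hn0 : (0:ℝ) < n := by positivity
  have hπn0 : 0 < π / n := by positivity
  have hπn2 : π / n ≤ π / 2 := by
    apply div_le_div_of_nonneg_left pi_pos.le (by norm_num)
    exact_mod_cast hn
  have hsinb : 0 < Real.sin (π / n) := by
    apply Real.sin_pos_of_pos_of_lt_pi hπn0
    linarith [pi_pos]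
  have hr0 : 0 < r := by
    rw [hr]; positivity
  -- key distance fact
  have key : ∀ j k : ℕ, j < k → k < n → 2 < dist (p j) (p k) := by
    intro j k hjk hkn
    set m : ℕ := k - j with hm
    have hm1 : 1 ≤ m := by omega
    have hmn : m ≤ n - 1 := by omega
    have hmcast : (k : ℝ) - j = m := by
      push_cast [hm]
      rw [Nat.cast_sub hjk.le]
    -- the half-angle
    set x : ℝ := π * m / n with hx
    have hm1' : (1:ℝ) ≤ (m:ℝ) := by exact_mod_cast hm1
    have hmr : (m : ℝ) + 1 ≤ (n:ℝ) := by
      have : m + 1 ≤ n := by omega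
      exact_mod_cast this
    have hxb : π / n ≤ x := by
      rw [hx]
      gcongr
      nlinarith [pi_pos]
    have hxub : x ≤ π - π / n := by
      have heq : π - π / n = π * ((n:ℝ) - 1) / n := by field_simp
      rw [hx, heq]
      gcongr
      · linarith
    have hsinx : Real.sin (π / n) ≤ Real.sin x := sin_base_le _ _ hπn0 hπn2 hxb hxub
    have hsinx0 : 0 < Real.sin x := lt_of_lt_of_le hsinb hsinx
    -- compute distance
    have hd : dist (p j) (p k) = Real.sqrt ((p j 0 - p k 0)^2 + (p j 1 - p k 1)^2) := by
      rw [EuclideanSpace.dist_eq, Fin.sum_univ_two]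
      simp [Real.dist_eq, sq_abs]
    obtain ⟨hj0, hj1⟩ := hp j
    obtain ⟨hk0, hk1⟩ := hp k
    set A : ℝ := 2 * π * j / n with hA
    set B : ℝ := 2 * π * k / n with hB
    have hBA : B - A = 2 * x := by
      rw [hA, hB, hx]; field_simp; nlinarith [hmcast]
    have hsum : (p j 0 - p k 0)^2 + (p j 1 - p k 1)^2
        = r^2 * (2 - 2 * Real.cos (B - A)) := by
      rw [hj0, hj1, hk0, hk1, Real.cos_sub]
      have h1 := Real.sin_sq_add_cos_sq A
      have h2 := Real.sin_sq_add_cos_sq B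
      linear_combination r^2 * h1 + r^2 * h2
    have hcos : Real.cos (B - A) = 1 - 2 * Real.sin x ^ 2 := by
      rw [hBA, Real.cos_two_mul']
      linear_combination Real.sin_sq_add_cos_sq x
    have hval : (p j 0 - p k 0)^2 + (p j 1 - p k 1)^2 = 4 * r^2 * Real.sin x ^ 2 := by
      rw [hsum, hcos]; ring
    rw [hd, hval]
    rw [show (2:ℝ) = Real.sqrt 4 by rw [show (4:ℝ) = 2^2 by norm_num, Real.sqrt_sq (by norm_num)]]
    apply Real.sqrt_lt_sqrt (by norm_num)
    have hrs : a / 2 ≤ r * Real.sin x := by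
      rw [hr]
      rw [div_mul_eq_mul_div, div_le_div_iff₀ (by norm_num : (0:ℝ) < 2) (mul_pos two_pos hsinb)]
      nlinarith [mul_le_mul_of_nonneg_left hsinx (by linarith : (0:ℝ) ≤ a)]
    have h2 : 1 < r * Real.sin x := by linarith
    nlinarith [h2, sq_nonneg (r * Real.sin x - 1)]
  -- conclude
  intro j k hj hk hne
  have main : ∀ j k : ℕ, j < k → k < n →
      Disjoint (Metric.closedBall (p j) 1) (Metric.closedBall (p k) 1) := by
    intro j k hjk hkn
    exact Metric.closedBall_disjoint_closedBall (by linarith [key j k hjk hkn])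
  rcases lt_or_gt_of_ne hne with h | h
  · exact main j k h hk
  · exact (main k j h hj).symm
end

section
/- Let c be a point of the Euclidean plane, r_c > 0, l a point with dist(c, l) = r_c, p = 2·c − l, d ≥ 0, and l' = l + (d / r_c)·(l − c). Let m be the midpoint of p and l' and ρ' = r_c + d/2. Then (i) dist(m, p) = dist(m, l') = ρ'; (ii) the closed disc of center c and radius r_c is contained in the closed disc of center m and radius ρ'; and (iii) every closed disc containing both p and l' has radius at least ρ'. Hence the closed disc of center m and radius ρ' is a smallest enclosing disc of any set of points containing p and l' and contained in the original disc union {l'}. -/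
open Metric

/-!
Write `p = 2c - l` for the antipode of the leader `l` and `l' = l + t (l - c)` for the leader
pushed outward, with `t = d / r_c`. Both points lie on the line through `c` and `l`, so
`dist p l' = (2 + t) ‖l - c‖ = 2 r_c + d`, and no disc of radius below half this distance can
contain both. The midpoint `m` realises the bound and sits at distance `d / 2` from `c`, so it
still covers the old disc of radius `r_c`.
-/

theorem radius_ge_half_dist_of_mem_closedBall {X : Type*} [PseudoMetricSpace X] {x y z : X}
    {ρ : ℝ} (hx : x ∈ closedBall z ρ) (hy : y ∈ closedBall z ρ) : dist x y / 2 ≤ ρ := by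
  have := dist_triangle_right x y z
  rw [mem_closedBall] at hx hy
  linarith

section Expansion

variable {E : Type*} [NormedAddCommGroup E] [NormedSpace ℝ E] {t : ℝ}

theorem dist_antipode_expand (c l : E) (ht : 0 ≤ t) :
    dist ((2 : ℝ) • c - l) (l + t • (l - c)) = (2 + t) * ‖l - c‖ := by
  have hsub : (2 : ℝ) • c - l - (l + t • (l - c)) = -((2 + t) • (l - c)) := by module
  rw [dist_eq_norm, hsub, norm_neg, norm_smul, Real.norm_of_nonneg (by linarith)]

theorem dist_midpoint_antipode_expand_center (c l : E) (ht : 0 ≤ t) :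
    dist (midpoint ℝ ((2 : ℝ) • c - l) (l + t • (l - c))) c = t / 2 * ‖l - c‖ := by
  have hsub : midpoint ℝ ((2 : ℝ) • c - l) (l + t • (l - c)) - c = (t / 2) • (l - c) := by
    rw [midpoint_eq_smul_add, invOf_eq_inv]
    module
  rw [dist_eq_norm, hsub, norm_smul, Real.norm_of_nonneg (by linarith)]

end Expansion

theorem new_sec_after_expansion
    (c l : EuclideanSpace ℝ (Fin 2)) (r_c : ℝ) (hrc : 0 < r_c)
    (hl : dist c l = r_c)
    (p : EuclideanSpace ℝ (Fin 2)) (hpdef : p = (2 : ℝ) • c - l)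
    (d : ℝ) (hd : 0 ≤ d)
    (l' : EuclideanSpace ℝ (Fin 2)) (hl' : l' = l + (d / r_c) • (l - c))
    (m : EuclideanSpace ℝ (Fin 2)) (hm : m = midpoint ℝ p l')
    (ρ' : ℝ) (hρ' : ρ' = r_c + d / 2) :
    (dist m p = ρ' ∧ dist m l' = ρ') ∧
    Metric.closedBall c r_c ⊆ Metric.closedBall m ρ' ∧
    (∀ (c'' : EuclideanSpace ℝ (Fin 2)) (ρ'' : ℝ),
      p ∈ Metric.closedBall c'' ρ'' → l' ∈ Metric.closedBall c'' ρ'' →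
      ρ' ≤ ρ'') ∧
    (∀ S : Set (EuclideanSpace ℝ (Fin 2)), p ∈ S → l' ∈ S →
      S ⊆ Metric.closedBall c r_c ∪ {l'} →
      S ⊆ Metric.closedBall m ρ' ∧
      ∀ (c'' : EuclideanSpace ℝ (Fin 2)) (ρ'' : ℝ),
        S ⊆ Metric.closedBall c'' ρ'' → ρ' ≤ ρ'') := by
  have hlc : ‖l - c‖ = r_c := by rw [← dist_eq_norm, dist_comm, hl]
  have ht : 0 ≤ d / r_c := by positivity
  have htr : d / r_c * r_c = d := div_mul_cancel₀ d hrc.ne'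
  have hpl' : dist p l' = 2 * ρ' := by
    rw [hpdef, hl', dist_antipode_expand c l ht, hlc, hρ']
    linarith
  have hmp : dist m p = ρ' := by
    rw [hm, dist_midpoint_left, hpl', Real.norm_two]; ring
  have hml' : dist m l' = ρ' := by
    rw [hm, dist_midpoint_right, hpl', Real.norm_two]; ring
  have hmc : dist c m = d / 2 := by
    rw [dist_comm, hm, hpdef, hl', dist_midpoint_antipode_expand_center c l ht, hlc]
    linarith
  have hball : closedBall c r_c ⊆ closedBall m ρ' :=
    closedBall_subset_closedBall' (by rw [hmc, hρ'])
  have hlower : ∀ (c'' : EuclideanSpace ℝ (Fin 2)) (ρ'' : ℝ),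
      p ∈ closedBall c'' ρ'' → l' ∈ closedBall c'' ρ'' → ρ' ≤ ρ'' := fun _ _ hp hl'' => by
    have := radius_ge_half_dist_of_mem_closedBall hp hl''
    linarith
  refine ⟨⟨hmp, hml'⟩, hball, hlower, fun S hpS hl'S hS => ⟨?_, ?_⟩⟩
  · refine hS.trans (Set.union_subset hball (Set.singleton_subset_iff.mpr ?_))
    exact mem_closedBall.mpr (by rw [dist_comm, hml'])
  · exact fun c'' ρ'' hSsub => hlower c'' ρ'' (hSsub hpS) (hSsub hl'S)
end
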